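/- There exists a complete and transitive relation ⪰ on X = [0,1]^ℕ satisfying strict Pareto and intergenerational equity, such that the set of pairs that are not strictly comparable is a Borel set of measure zero with respect to the product of the countable power of Lebesgue measure with itself. -/

import Mathlib

/-! The Suppes–Sen relation, under which `x` dominates `y` when some finite rearrangement of `x`
is coordinatewise at least `y`, is a preorder containing strict Pareto. Two sequences are
indifferent for it exactly when one is a finite rearrangement of the other: along the (finite)
orbit of a finite permutation a weakly increasing chain of values must be constant. A Szpilrajn
linear extension of its antisymmetrization is then complete, transitive, Paretian and equitable,
with the same indifference classes. So the indifference set is a countable union of graphs of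
the measurable maps `x ↦ x ∘ τ`, each of which is null because the product measure has no atoms. -/

open MeasureTheory

def IsFinPerm (σ : ℕ → ℕ) : Prop :=
  Function.Bijective σ ∧ {n | σ n ≠ n}.Finite

/-- A measure on `[0,1]^ℕ` is the countable product of Lebesgue measure if all of its
finite-dimensional marginals are the corresponding finite products of Lebesgue measure. -/
def IsLebesguePowerMeasure (μ : Measure (ℕ → Set.Icc (0:ℝ) 1)) : Prop :=
  ∀ n : ℕ, μ.map (fun x (i : Fin n) => x i) =
    Measure.pi (fun _ : Fin n => (volume : Measure (Set.Icc (0:ℝ) 1)))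

open Function

lemma isFinPerm_id : IsFinPerm id := ⟨bijective_id, by simp⟩

namespace IsFinPerm

variable {σ τ : ℕ → ℕ}

lemma comp (hσ : IsFinPerm σ) (hτ : IsFinPerm τ) : IsFinPerm (σ ∘ τ) := by
  refine ⟨hσ.1.comp hτ.1, (hσ.2.union hτ.2).subset fun n hn => ?_⟩
  by_contra h
  simp_all

lemma exists_comp_eq_id (hσ : IsFinPerm σ) : ∃ ρ, IsFinPerm ρ ∧ σ ∘ ρ = id := by
  let e := Equiv.ofBijective σ hσ.1
  refine ⟨e.symm, ⟨e.symm.bijective, (hσ.2.image σ).subset fun n hn => ?_⟩,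
    funext e.apply_symm_apply⟩
  exact ⟨e.symm n, fun h => hn (h.symm.trans (e.apply_symm_apply n)), e.apply_symm_apply n⟩

lemma mem_periodicPts (hσ : IsFinPerm σ) (n : ℕ) : n ∈ periodicPts σ := by
  set s := insert n {m | σ m ≠ m}
  have : Finite s := (hσ.2.insert n).to_subtype
  have hmaps : Set.MapsTo σ s s := fun m _ => by
    by_cases h : σ m = m
    · rwa [h]
    · exact Or.inr fun h' => h (hσ.1.1 h')
  obtain ⟨k, hk, hper⟩ := Function.mem_periodicPts.1 <|
    (hmaps.restrict_inj.2 hσ.1.1.injOn).mem_periodicPts ⟨n, Set.mem_insert n _⟩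
  have : σ^[k] n = n := by simpa [hmaps.coe_iterate_restrict] using congrArg Subtype.val hper
  exact Function.mem_periodicPts.2 ⟨k, hk, this⟩

variable {α : Type*} [PartialOrder α]

lemma comp_eq_of_le_comp (hσ : IsFinPerm σ) {x : ℕ → α} (h : x ≤ x ∘ σ) : x ∘ σ = x := by
  have chain : ∀ m j, x m ≤ x (σ^[j] m) := fun m j => by
    induction j with
    | zero => rfl
    | succ j ih => exact ih.trans (by rw [iterate_succ_apply']; exact h _)
  funext n
  obtain ⟨k, hk⟩ :=
    Nat.exists_eq_add_one.2 (minimalPeriod_pos_of_mem_periodicPts (hσ.mem_periodicPts n))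
  refine le_antisymm ?_ (h n)
  calc x (σ n) ≤ x (σ^[k] (σ n)) := chain _ _
    _ = x n := by rw [← iterate_succ_apply, Nat.succ_eq_add_one, ← hk, iterate_minimalPeriod]

lemma eq_of_le_of_le_comp (hσ : IsFinPerm σ) {x y : ℕ → α} (hxy : x ≤ y) (hyx : y ≤ x ∘ σ) :
    x = y :=
  le_antisymm hxy (hyx.trans (hσ.comp_eq_of_le_comp (hxy.trans hyx)).le)

end IsFinPerm

lemma countable_setOf_isFinPerm : {σ : ℕ → ℕ | IsFinPerm σ}.Countable := by
  classical
  refine (Set.countable_iUnion fun s : Finset ℕ =>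
    Set.countable_range fun f : s → ℕ => fun n => if h : n ∈ s then f ⟨n, h⟩ else n).mono ?_
  intro σ hσ
  refine Set.mem_iUnion.2 ⟨hσ.2.toFinset, fun n => σ n, funext fun n => ?_⟩
  by_cases h : n ∈ hσ.2.toFinset <;> simp_all

def SuppesSen (α : Type*) := ℕ → α

def toSuppesSen {α : Type*} : (ℕ → α) ≃ SuppesSen α := Equiv.refl _

section SuppesSen

variable {α : Type*}

instance [Preorder α] : Preorder (SuppesSen α) where
  le x y := ∃ σ, IsFinPerm σ ∧ toSuppesSen.symm x ≤ toSuppesSen.symm y ∘ σ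
  le_refl _ := ⟨id, isFinPerm_id, le_rfl⟩
  le_trans _ _ _ := fun ⟨σ, hσ, hxy⟩ ⟨τ, hτ, hyz⟩ =>
    ⟨τ ∘ σ, hτ.comp hσ, hxy.trans fun n => hyz (σ n)⟩

lemma toSuppesSen_le_toSuppesSen_iff [Preorder α] {x y : ℕ → α} :
    toSuppesSen x ≤ toSuppesSen y ↔ ∃ σ, IsFinPerm σ ∧ x ≤ y ∘ σ :=
  Iff.rfl

variable [PartialOrder α] {x y : ℕ → α}

lemma antisymmRel_toSuppesSen_iff :
    AntisymmRel (· ≤ ·) (toSuppesSen x) (toSuppesSen y) ↔ ∃ τ, IsFinPerm τ ∧ y = x ∘ τ := by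
  simp only [AntisymmRel, toSuppesSen_le_toSuppesSen_iff]
  constructor
  · rintro ⟨⟨σ, hσ, hxy⟩, ⟨τ, hτ, hyx⟩⟩
    exact ⟨τ, hτ, (hσ.comp hτ).eq_of_le_of_le_comp hyx fun n => hxy (τ n)⟩
  · rintro ⟨τ, hτ, rfl⟩
    obtain ⟨ρ, hρ, hτρ⟩ := hτ.exists_comp_eq_id
    exact ⟨⟨ρ, hρ, by rw [comp_assoc, hτρ, comp_id]⟩, ⟨τ, hτ, le_rfl⟩⟩

lemma toSuppesSen_lt_toSuppesSen (h : x < y) : toSuppesSen x < toSuppesSen y := by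
  refine lt_of_le_not_ge ⟨id, isFinPerm_id, h.le⟩ ?_
  rintro ⟨σ, hσ, hyx⟩
  exact h.ne (hσ.eq_of_le_of_le_comp h.le hyx)

end SuppesSen

section Linearize

variable {β : Type*} [Preorder β]

noncomputable def linearize (b : β) : LinearExtension (Antisymmetrization β (· ≤ ·)) :=
  toLinearExtension (toAntisymmetrization (· ≤ ·) b)

lemma strictMono_linearize : StrictMono (linearize : β → _) := fun _ _ h =>
  toLinearExtension.monotone.strictMono_of_injective (fun _ _ => id)
    (toAntisymmetrization_lt_toAntisymmetrization_iff.2 h)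

lemma linearize_eq_linearize_iff {a b : β} :
    linearize a = linearize b ↔ AntisymmRel (· ≤ ·) a b :=
  Quotient.eq

end Linearize

lemma measurable_comp_right {ι κ α : Type*} [MeasurableSpace α] (f : κ → ι) :
    Measurable fun x : ι → α => x ∘ f :=
  measurable_pi_lambda _ fun k => measurable_pi_apply (f k)

section Graph

variable {α β : Type*} [MeasurableSpace α] [MeasurableSpace β] [MeasurableEq β] {g : α → β}

lemma measurableSet_setOf_snd_eq (hg : Measurable g) : MeasurableSet {p : α × β | p.2 = g p.1} :=
  measurableSet_eq_fun measurable_snd (hg.comp measurable_fst)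

lemma measure_prod_setOf_snd_eq_null {μ : Measure α} {ν : Measure β} [SFinite ν]
    [NullSingletonClass ν] (hg : Measurable g) : μ.prod ν {p | p.2 = g p.1} = 0 := by
  rw [Measure.prod_apply (measurableSet_setOf_snd_eq hg)]
  simp

end Graph

namespace IsLebesguePowerMeasure

variable {μ : Measure (ℕ → Set.Icc (0:ℝ) 1)}

lemma isProbabilityMeasure (hμ : IsLebesguePowerMeasure μ) : IsProbabilityMeasure μ := by
  have : IsProbabilityMeasure (μ.map fun x (i : Fin 0) => x i) := by
    rw [hμ 0]
    infer_instance
  exact Measure.isProbabilityMeasure_of_map fun x (i : Fin 0) => x i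

lemma nullSingletonClass (hμ : IsLebesguePowerMeasure μ) : NullSingletonClass μ where
  measure_singleton z := by
    have hproj : Measurable fun (x : ℕ → Set.Icc (0:ℝ) 1) (i : Fin 1) => x i :=
      measurable_comp_right Fin.val
    refine measure_mono_null (t := (fun x (i : Fin 1) => x i) ⁻¹' {f | f 0 = z 0}) (by simp) ?_
    exact nonpos_iff_eq_zero.1 <| (Measure.le_map_apply hproj.aemeasurable _).trans_eq <| by
      rw [hμ 1, Measure.pi_hyperplane]

end IsLebesguePowerMeasure

/-- There is a complete and transitive relation on `[0,1]^ℕ` satisfying strict Pareto and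
intergenerational equity such that the set of pairs that are not strictly comparable is a
Borel set of measure zero with respect to the product of the countable power of Lebesgue
measure with itself. -/
theorem exists_decisive_equitable_order_unitInterval :
    ∃ R : (ℕ → Set.Icc (0:ℝ) 1) → (ℕ → Set.Icc (0:ℝ) 1) → Prop,
      Total R ∧ Transitive R ∧
      (∀ x y : ℕ → Set.Icc (0:ℝ) 1, (∀ n, (y n : ℝ) ≤ x n) → x ≠ y → (R x y ∧ ¬ R y x)) ∧
      (∀ (x : ℕ → Set.Icc (0:ℝ) 1) (σ : ℕ → ℕ), IsFinPerm σ →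
        (R x (x ∘ σ) ∧ R (x ∘ σ) x)) ∧
      MeasurableSet {p : (ℕ → Set.Icc (0:ℝ) 1) × (ℕ → Set.Icc (0:ℝ) 1) |
          ¬ (R p.1 p.2 ∧ ¬ R p.2 p.1) ∧ ¬ (R p.2 p.1 ∧ ¬ R p.1 p.2)} ∧
      ∀ μ : Measure (ℕ → Set.Icc (0:ℝ) 1), IsLebesguePowerMeasure μ →
        (μ.prod μ) {p : (ℕ → Set.Icc (0:ℝ) 1) × (ℕ → Set.Icc (0:ℝ) 1) |
          ¬ (R p.1 p.2 ∧ ¬ R p.2 p.1) ∧ ¬ (R p.2 p.1 ∧ ¬ R p.1 p.2)} = 0 := by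
  set φ := fun x : ℕ → Set.Icc (0:ℝ) 1 => linearize (toSuppesSen x)
  have hindiff : {p : (ℕ → Set.Icc (0:ℝ) 1) × (ℕ → Set.Icc (0:ℝ) 1) |
      ¬ (φ p.2 ≤ φ p.1 ∧ ¬ φ p.1 ≤ φ p.2) ∧ ¬ (φ p.1 ≤ φ p.2 ∧ ¬ φ p.2 ≤ φ p.1)} =
      ⋃ τ ∈ {σ | IsFinPerm σ}, {p | p.2 = p.1 ∘ τ} := by
    ext p
    simp only [Set.mem_ofPred_eq, ← lt_iff_le_not_ge, not_lt, ← le_antisymm_iff, φ,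
      linearize_eq_linearize_iff, antisymmRel_toSuppesSen_iff, Set.mem_iUnion, exists_prop]
  refine ⟨fun x y => φ y ≤ φ x, fun x y => le_total _ _, fun x y z hxy hyz => hyz.trans hxy,
    fun x y hyx hne => lt_iff_le_not_ge.1 <| strictMono_linearize <|
      toSuppesSen_lt_toSuppesSen (lt_of_le_of_ne hyx hne.symm),
    fun x σ hσ => ?_, ?_, fun μ hμ => ?_⟩
  · have : φ x = φ (x ∘ σ) :=
      linearize_eq_linearize_iff.2 (antisymmRel_toSuppesSen_iff.2 ⟨σ, hσ, rfl⟩)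
    exact ⟨this.ge, this.le⟩
  · rw [hindiff]
    exact .biUnion countable_setOf_isFinPerm fun τ _ =>
      measurableSet_setOf_snd_eq (measurable_comp_right τ)
  · have := hμ.isProbabilityMeasure
    have := hμ.nullSingletonClass
    rw [hindiff, measure_biUnion_null_iff countable_setOf_isFinPerm]
    exact fun τ _ => measure_prod_setOf_snd_eq_null (measurable_comp_right τ)
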